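/- Large scale decomposition of test functions: fix r ∈ ℕ₀ and c ∈ ℕ₀ ∪ {−1}. There exists a constant cst > 0 depending only on r, c and d such that for every test function ψ ∈ 𝓑^r and every M ∈ ℕ₀, one can write ψ = (ψ̃^{[M]})^{2^M} + Σ_{n=0}^{M} (ψ̌^{[n]})^{2^n} for suitable test functions ψ̃^{[M]} ∈ cst·𝓑^r and ψ̌^{[n]} ∈ cst·𝓑^r_c for 0 ≤ n ≤ M (here φ^λ := φ_0^λ denotes the rescaling at scale λ centred at the origin, and 𝓑^r_c consists of elements of 𝓑^r annihilating all monomials of degree ≤ c). -/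

import Mathlib

open MeasureTheory Metric Filter
open scoped Classical Pointwise Topology

noncomputable section

/-- Euclidean space `ℝ^d`. -/
abbrev Ed (d : ℕ) := EuclideanSpace ℝ (Fin d)

/-- Multi-indices `k ∈ ℕ₀^d`. -/
abbrev MIdx (d : ℕ) := Fin d → ℕ

variable {d : ℕ}

/-- Degree `|k|` of a multi-index. -/
def mdeg (k : MIdx d) : ℕ := ∑ i, k i

/-- Factorial `k!` of a multi-index. -/
def mfact (k : MIdx d) : ℕ := ∏ i, Nat.factorial (k i)

/-- Monomial `v^k`. -/
def mpow (v : Ed d) (k : MIdx d) : ℝ := ∏ i, (v i) ^ (k i)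

/-- Partial (line) derivative in coordinate `i`. -/
def pd (i : Fin d) (f : Ed d → ℝ) : Ed d → ℝ :=
  fun x => lineDeriv ℝ f x (EuclideanSpace.single i (1:ℝ))

/-- Iterated partial derivative `∂^k`. -/
def mderiv (k : MIdx d) (f : Ed d → ℝ) : Ed d → ℝ :=
  (List.finRange d).foldr (fun i g => (pd i)^[k i] g) f

/-- Smooth compactly supported test function. -/
def IsTest (φ : Ed d → ℝ) : Prop := ContDiff ℝ (⊤ : ℕ∞) φ ∧ HasCompactSupport φ

/-- The `C^r` norm `max_{|k| ≤ r} ‖∂^k φ‖_∞`. -/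
def crNorm (r : ℕ) (φ : Ed d → ℝ) : ℝ :=
  ⨆ k : {k : MIdx d // mdeg k ≤ r}, ⨆ x : Ed d, |mderiv k.1 φ x|

/-- Generalized functions: arbitrary functionals on functions on `ℝ^d`. -/
abbrev DFunc (d : ℕ) := (Ed d → ℝ) → ℝ

/-- `f` is a distribution in `𝒟'(ℝ^d)`: linear on test functions and,
on every compact, bounded by some `C^r` norm. -/
def IsDistribution (f : DFunc d) : Prop :=
  (∀ φ ψ : Ed d → ℝ, IsTest φ → IsTest ψ → f (φ + ψ) = f φ + f ψ) ∧
  (∀ (c : ℝ) (φ : Ed d → ℝ), IsTest φ → f (c • φ) = c * f φ) ∧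
  (∀ K : Set (Ed d), IsCompact K → ∃ (r : ℕ) (C : ℝ),
    ∀ φ : Ed d → ℝ, IsTest φ → tsupport φ ⊆ K → |f φ| ≤ C * crNorm r φ)

/-- `f` is a distribution of order `r` (bound by the `C^r` norm on every compact). -/
def DistOrder (f : DFunc d) (r : ℕ) : Prop :=
  ∀ K : Set (Ed d), IsCompact K → ∃ C : ℝ,
    ∀ φ : Ed d → ℝ, IsTest φ → tsupport φ ⊆ K → |f φ| ≤ C * crNorm r φ

/-- `φ` is of class `C^r`: all iterated coordinate-partials up to order `r`
exist and are continuous. -/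
def IsCr (r : ℕ) (φ : Ed d → ℝ) : Prop :=
  ∀ k : MIdx d, mdeg k ≤ r →
    Continuous (mderiv k φ) ∧
    (mdeg k < r → ∀ (i : Fin d) (x : Ed d),
      LineDifferentiableAt ℝ (mderiv k φ) x (EuclideanSpace.single i (1:ℝ)))

/-- The functional `f` acts canonically (linearly, with local order-`r` bounds) on all
compactly supported `C^r` functions; i.e. `f` incorporates the canonical extension of a
distribution of order `r`. -/
def OrderExt (f : DFunc d) (r : ℕ) : Prop :=
  (∀ φ ψ : Ed d → ℝ, IsCr r φ → HasCompactSupport φ → IsCr r ψ → HasCompactSupport ψ →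
      f (φ + ψ) = f φ + f ψ) ∧
  (∀ (c : ℝ) (φ : Ed d → ℝ), IsCr r φ → HasCompactSupport φ → f (c • φ) = c * f φ) ∧
  (∀ K : Set (Ed d), IsCompact K → ∃ C : ℝ,
    ∀ φ : Ed d → ℝ, IsCr r φ → HasCompactSupport φ → tsupport φ ⊆ K → |f φ| ≤ C * crNorm r φ)

/-- The scaled recentred test function `φ_x^λ(y) = λ^{-d} φ(λ^{-1}(y-x))`. -/
def scTF (φ : Ed d → ℝ) (x : Ed d) (l : ℝ) : Ed d → ℝ :=
  fun y => (l ^ d)⁻¹ * φ (l⁻¹ • (y - x))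

/-- The class `𝓑^r` of smooth test functions supported in the closed unit ball with
all derivatives of order `≤ r` bounded by one. -/
def TB (d r : ℕ) : Set (Ed d → ℝ) :=
  {φ | IsTest φ ∧ tsupport φ ⊆ closedBall (0 : Ed d) 1 ∧
    ∀ k : MIdx d, mdeg k ≤ r → ∀ x, |mderiv k φ x| ≤ 1}

/-- The class `𝓑_γ` of smooth test functions supported in the closed unit ball which
annihilate all monomials of degree `≤ γ`. -/
def TAnn (d : ℕ) (γ : ℝ) : Set (Ed d → ℝ) :=
  {φ | IsTest φ ∧ tsupport φ ⊆ closedBall (0 : Ed d) 1 ∧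
    ∀ k : MIdx d, (mdeg k : ℝ) ≤ γ → (∫ z, φ z * mpow z k) = 0}

/-- The class `𝓑^r_γ = 𝓑^r ∩ 𝓑_γ`. -/
def TBAnn (d r : ℕ) (γ : ℝ) : Set (Ed d → ℝ) := TB d r ∩ TAnn d γ

/-- A germ: a family of functionals indexed by base points. -/
abbrev GermF (d : ℕ) := Ed d → DFunc d

/-- A germ of distributions, measurable in the base point. -/
def IsGerm (F : GermF d) : Prop :=
  (∀ x, IsDistribution (F x)) ∧ ∀ φ : Ed d → ℝ, IsTest φ → Measurable (fun x => F x φ)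

/-- Homogeneity bound with constant `C`: `|F_x(φ_x^λ)| ≤ C λ^ᾱ` on `(K, λ̄)` at order `r`. -/
def HomB (F : GermF d) (a : ℝ) (r : ℕ) (K : Set (Ed d)) (lb C : ℝ) : Prop :=
  ∀ x ∈ K, ∀ l : ℝ, 0 < l → l ≤ lb → ∀ φ ∈ TB d r, |F x (scTF φ x l)| ≤ C * l ^ a

/-- Coherence bound with constant `C`:
`|(F_y - F_x)(φ_x^λ)| ≤ C λ^α (|y-x|+λ)^{γ-α}` on `(K, λ̄)` at order `r`. -/
def CohB (F : GermF d) (a g : ℝ) (r : ℕ) (K : Set (Ed d)) (lb C : ℝ) : Prop :=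
  ∀ x ∈ K, ∀ y ∈ K, ∀ l : ℝ, 0 < l → l ≤ lb → ∀ φ ∈ TB d r,
    |F y (scTF φ x l) - F x (scTF φ x l)| ≤ C * l ^ a * (dist y x + l) ^ (g - a)

/-- `F` is `ᾱ`-homogeneous of order `r`. -/
def Homog (F : GermF d) (a : ℝ) (r : ℕ) : Prop :=
  ∀ K : Set (Ed d), IsCompact K → ∀ lb : ℝ, 1 ≤ lb → ∃ C, HomB F a r K lb C

/-- `F` is `(α, γ)`-coherent of order `r`. -/
def Coh (F : GermF d) (a g : ℝ) (r : ℕ) : Prop :=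
  ∀ K : Set (Ed d), IsCompact K → ∀ lb : ℝ, 1 ≤ lb → ∃ C, CohB F a g r K lb C

/-- Weak homogeneity bound with constant `C` (test functions annihilating polynomials
at small scales, plus a scale-one bound on all of `𝓑^r`). -/
def WHomB (F : GermF d) (a : ℝ) (r : ℕ) (K : Set (Ed d)) (lb C : ℝ) : Prop :=
  (∀ x ∈ K, ∀ l : ℝ, 0 < l → l ≤ lb → ∀ φ ∈ TBAnn d r a,
      |F x (scTF φ x l)| ≤ C * l ^ a) ∧
  (∀ x ∈ K, ∀ ψ ∈ TB d r, |F x (scTF ψ x 1)| ≤ C)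

/-- Weak coherence bound with constant `C`. -/
def WCohB (F : GermF d) (a g : ℝ) (r : ℕ) (K : Set (Ed d)) (lb C : ℝ) : Prop :=
  (∀ x ∈ K, ∀ y ∈ K, ∀ l : ℝ, 0 < l → l ≤ lb → ∀ φ ∈ TBAnn d r g,
      |F y (scTF φ x l) - F x (scTF φ x l)| ≤ C * l ^ a * (dist y x + l) ^ (g - a)) ∧
  (∀ x ∈ K, ∀ y ∈ K, ∀ ψ ∈ TB d r, |F y (scTF ψ x 1) - F x (scTF ψ x 1)| ≤ C)

/-- `F` is weakly `ᾱ`-homogeneous of order `r`. -/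
def WHomog (F : GermF d) (a : ℝ) (r : ℕ) : Prop :=
  ∀ K : Set (Ed d), IsCompact K → ∀ lb : ℝ, 1 ≤ lb → ∃ C, WHomB F a r K lb C

/-- `F` is weakly `(α,γ)`-coherent of order `r`. -/
def WCoh (F : GermF d) (a g : ℝ) (r : ℕ) : Prop :=
  ∀ K : Set (Ed d), IsCompact K → ∀ lb : ℝ, 1 ≤ lb → ∃ C, WCohB F a g r K lb C

/-- The canonical order `r_{ᾱ,α} = min{n ∈ ℕ₀ : n > max(-ᾱ, -α)}`. -/
def rJ (a b : ℝ) : ℕ := (⌊max (-a) (-b)⌋ + 1).toNat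

/-- Joint homogeneity-and-coherence bound at the canonical order. -/
def JointB (F : GermF d) (ab a g : ℝ) (K : Set (Ed d)) (lb C : ℝ) : Prop :=
  HomB F ab (rJ ab a) K lb C ∧ CohB F a g (rJ ab a) K lb C

/-- Joint weak homogeneity-and-coherence bound at the canonical order. -/
def WJointB (F : GermF d) (ab a g : ℝ) (K : Set (Ed d)) (lb C : ℝ) : Prop :=
  WHomB F ab (rJ ab a) K lb C ∧ WCohB F a g (rJ ab a) K lb C

/-- `R` is a `γ`-reconstruction of the `(α,γ)`-coherent germ `F`. -/
def IsRec (F : GermF d) (R : DFunc d) (a g : ℝ) : Prop :=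
  ∀ r : ℕ, -a < (r : ℝ) → ∀ K : Set (Ed d), IsCompact K → ∃ C : ℝ,
    ∀ x ∈ K, ∀ l : ℝ, 0 < l → l ≤ 1 → ∀ φ ∈ TB d r,
      |F x (scTF φ x l) - R (scTF φ x l)| ≤ C * l ^ g

/-- Mixed partial derivative `∂_1^k ∂_2^l K(x,y)` of a kernel. -/
def mixDeriv (k l : MIdx d) (Kf : Ed d → Ed d → ℝ) (x y : Ed d) : ℝ :=
  mderiv k (fun x' => mderiv l (fun y' => Kf x' y') y) x

/-- The kernel `K(x,y)` is of class `C^{m,r}` (mixed partials `∂_1^k ∂_2^l`, `|k| ≤ m`,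
`|l| ≤ r`, exist and are continuous). -/
def IsCmr (m r : ℕ) (Kf : Ed d → Ed d → ℝ) : Prop :=
  ∀ k l : MIdx d, mdeg k ≤ m → mdeg l ≤ r →
    Continuous (fun p : Ed d × Ed d => mixDeriv k l Kf p.1 p.2) ∧
    (mdeg k < m → ∀ (i : Fin d) (x y : Ed d),
      LineDifferentiableAt ℝ (fun x' => mixDeriv k l Kf x' y) x
        (EuclideanSpace.single i (1:ℝ))) ∧
    (mdeg l < r → ∀ (j : Fin d) (x y : Ed d),
      LineDifferentiableAt ℝ (mderiv l (fun y' => Kf x y')) y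
        (EuclideanSpace.single j (1:ℝ)))

/-- `Kn` is the dyadic decomposition of a `β`-regularising kernel of order `(m,r)`
with range `ρ` (Definition 2.3 of the paper). -/
def RegKer (d : ℕ) (β : ℝ) (m r : ℕ) (ρ : ℝ) (Kn : ℕ → Ed d → Ed d → ℝ) : Prop :=
  (∀ n, IsCmr m r (Kn n)) ∧
  (∀ n x y, Kn n x y ≠ 0 → dist x y ≤ ρ * 2 ^ (-(n : ℝ))) ∧
  (∀ K : Set (Ed d), IsCompact K → ∃ c : ℝ, 0 < c ∧
    (∀ n, ∀ k l : MIdx d, mdeg k ≤ m → mdeg l ≤ r → ∀ x ∈ K, ∀ y ∈ K,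
      |mixDeriv k l (Kn n) x y| ≤
        c * 2 ^ ((((d : ℝ) - β + (mdeg l : ℝ) + (mdeg k : ℝ))) * n)) ∧
    (∀ n, ∀ k l : MIdx d, mdeg k ≤ r → mdeg l ≤ r → ∀ y ∈ K,
      |∫ x, mpow (y - x) l * mderiv k (fun y' => Kn n x y') y| ≤ c * 2 ^ (-(β * (n : ℝ)))))

/-- `K_n^* ψ (y) = ∫ ψ(x) K_n(x,y) dx`. -/
def kstar (Kf : Ed d → Ed d → ℝ) (ψ : Ed d → ℝ) : Ed d → ℝ :=
  fun y => ∫ x, ψ x * Kf x y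

/-- `g = 𝖪 f`, i.e. `g(ψ) = Σ_n f(K_n^* ψ)` (with convergence) on test functions. -/
def KInt (Kn : ℕ → Ed d → Ed d → ℝ) (f g : DFunc d) : Prop :=
  ∀ ψ : Ed d → ℝ, IsTest ψ → HasSum (fun n => f (kstar (Kn n) ψ)) (g ψ)

/-- The kernel decomposition preserves polynomials at level `γ`. -/
def PresPoly (Kn : ℕ → Ed d → Ed d → ℝ) (γ : ℝ) : Prop :=
  ∀ n, ∀ k : MIdx d, (mdeg k : ℝ) ≤ γ →
    ∃ p : MvPolynomial (Fin d) ℝ, p.totalDegree ≤ mdeg k ∧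
      ∀ x : Ed d, (∫ y, Kn n x y * mpow y k) = MvPolynomial.eval (fun i => x i) p

/-- Distributional derivative `D^k f (φ) = (-1)^{|k|} f(∂^k φ)`. -/
def distDeriv (k : MIdx d) (f : DFunc d) : DFunc d :=
  fun φ => (-1 : ℝ) ^ (mdeg k) * f (mderiv k φ)

/-- `η ∈ 𝒟` with `∫ η = 1` and vanishing moments of orders `1 ≤ |l| < δ`. -/
def GoodEta (δ : ℝ) (η : Ed d → ℝ) : Prop :=
  IsTest η ∧ (∫ z, η z) = 1 ∧
    ∀ k : MIdx d, 1 ≤ mdeg k → (mdeg k : ℝ) < δ → (∫ z, η z * mpow z k) = 0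

/-- `v` is the pointwise derivative `D^k f(x)`, defined through the limit
`lim_{λ↓0} D^k f(η_x^λ)` for every admissible mollifier `η`. -/
def HasPtDeriv (f : DFunc d) (δ : ℝ) (k : MIdx d) (x : Ed d) (v : ℝ) : Prop :=
  ∀ η : Ed d → ℝ, GoodEta δ η →
    Tendsto (fun l : ℝ => distDeriv k f (scTF η x l)) (nhdsWithin 0 (Set.Ioi 0)) (nhds v)

/-- The Taylor polynomial `Σ_{|k| < δ} c_k (·-x)^k / k!`, viewed as the functional
`ψ ↦ Σ_{|k| < δ} c_k ∫ ψ(y) (y-x)^k / k! dy`. -/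
def taylorF (δ : ℝ) (c : MIdx d → ℝ) (x : Ed d) : DFunc d :=
  fun ψ => ∑ᶠ k ∈ {k : MIdx d | (mdeg k : ℝ) < δ},
    c k * ((∫ y, ψ y * mpow (y - x) k) / (mfact k))

/-- The smallest positive integer `> -γ` (used in Hölder–Zygmund spaces for `γ < 0`). -/
def rNeg (γ : ℝ) : ℕ := (⌊-γ + 1⌋).toNat

/-- The Hölder–Zygmund bound with constant `C` on the compact `K` (with `λ̄ = 1`). -/
def ZBound (γ : ℝ) (f : DFunc d) (K : Set (Ed d)) (C : ℝ) : Prop :=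
  (γ < 0 → ∀ x ∈ K, ∀ l : ℝ, 0 < l → l ≤ 1 → ∀ φ ∈ TB d (rNeg γ),
    |f (scTF φ x l)| ≤ C * l ^ γ) ∧
  (0 ≤ γ →
    (∀ x ∈ K, ∀ ψ ∈ TB d 0, |f (scTF ψ x 1)| ≤ C) ∧
    (∀ x ∈ K, ∀ l : ℝ, 0 < l → l ≤ 1 → ∀ φ ∈ TBAnn d 0 γ,
      |f (scTF φ x l)| ≤ C * l ^ γ))

/-- Membership in the local Hölder–Zygmund space `𝒵^γ`. -/
def MemZ (γ : ℝ) (f : DFunc d) : Prop :=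
  IsDistribution f ∧ ∀ K : Set (Ed d), IsCompact K → ∃ C, ZBound γ f K C

/-- `(Pg, Gg)` is a model with homogeneities `α` of order `rP`, with index set `S`. -/
def IsModelOn {ι : Type} (S : Finset ι) (Pg : ι → GermF d)
    (Gg : ι → ι → Ed d → Ed d → ℝ) (α : ι → ℝ) (rP : ℕ) : Prop :=
  (∀ i ∈ S, IsGerm (Pg i)) ∧
  (∀ i ∈ S, Homog (Pg i) (α i) rP) ∧
  (∀ i ∈ S, ∀ x y : Ed d, ∀ φ : Ed d → ℝ, IsTest φ →
    Pg i y φ = ∑ j ∈ S, Pg j x φ * Gg j i x y)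

/-- The modelled-distribution bound with constant `C` on the compact `K`. -/
def MDB {ι : Type} (S : Finset ι) (Gg : ι → ι → Ed d → Ed d → ℝ) (α : ι → ℝ)
    (γ : ℝ) (f : Ed d → ι → ℝ) (K : Set (Ed d)) (C : ℝ) : Prop :=
  (∀ x ∈ K, ∀ i ∈ S, |f x i| ≤ C) ∧
  (∀ x ∈ K, ∀ y ∈ K, ∀ i ∈ S,
    |(∑ j ∈ S, Gg i j x y * f y j) - f x i| ≤ C * (dist y x) ^ (γ - α i))

/-- `f` is a modelled distribution of order `γ` relative to the model data. -/
def IsMD {ι : Type} (S : Finset ι) (Gg : ι → ι → Ed d → Ed d → ℝ) (α : ι → ℝ)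
    (γ : ℝ) (f : Ed d → ι → ℝ) : Prop :=
  (∀ i ∈ S, Measurable fun x : Ed d => f x i) ∧
  ∀ K : Set (Ed d), IsCompact K → ∃ C, MDB S Gg α γ f K C

/-- The germ `⟨f, Π⟩_x = Σ_i f^i(x) Π^i_x`. -/
def germOf {ι : Type} (S : Finset ι) (Pg : ι → GermF d) (f : Ed d → ι → ℝ) : GermF d :=
  fun x φ => ∑ i ∈ S, f x i * Pg i x φ

/-!
Write `φ^λ = scTF φ 0 λ` for the rescaling at the origin. Fix smooth functions `μ_k`, `|k| ≤ c`,
supported in `B(0, 1/2)` and dual to the monomials: `∫ μ_k z^l dz = δ_{kl}` (products of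
one-dimensional ones, obtained from a bump `b` by inverting the positive definite Gram matrix
`∫ b(t) t^{i+j} dt`). Put `Ψ_0 = ψ` and, for `n ≥ 1`, `Ψ_n = ∑_k 2^{-n|k|} (∫ ψ z^k dz) μ_k`.
All `Ψ_n` are bounded in `C^r` uniformly in `ψ` and `n`, and since `φ ↦ φ^2` multiplies the
`k`-th moment by `2^{|k|}`, the functions `Ψ_n - (Ψ_{n+1})^2` annihilate all polynomials of
degree `≤ c`. As `(φ^2)^{2^n} = φ^{2^{n+1}}`, the decomposition with `ψ̃^{[M]} = (Ψ_{M+1})^2` and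
`ψ̌^{[n]} = Ψ_n - (Ψ_{n+1})^2` is a telescoping sum.
-/

open scoped ContDiff

lemma hasCompactSupport_of_tsupport_subset_closedBall {E F : Type*} [PseudoMetricSpace E]
    [ProperSpace E] [Zero F] {f : E → F} {x : E} {R : ℝ} (h : tsupport f ⊆ closedBall x R) :
    HasCompactSupport f :=
  (isCompact_closedBall x R).of_isClosed_subset (isClosed_tsupport f) h

lemma tsupport_const_smul_subset {X M α : Type*} [TopologicalSpace X] [Zero α]
    [SMulZeroClass M α] (a : M) (f : X → α) : tsupport (a • f) ⊆ tsupport f :=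
  closure_mono (Function.support_const_smul_subset a f)

section MultiIndex

lemma le_mdeg (k : MIdx d) (i : Fin d) : k i ≤ mdeg k :=
  Finset.single_le_sum (fun j _ => Nat.zero_le (k j)) (Finset.mem_univ i)

def lowDeg (d : ℕ) (γ : ℝ) : Finset (MIdx d) :=
  (Finset.Iic fun _ => ⌊γ⌋₊).filter fun k => (mdeg k : ℝ) ≤ γ

variable {γ : ℝ} {k : MIdx d}

lemma mem_lowDeg : k ∈ lowDeg d γ ↔ (mdeg k : ℝ) ≤ γ := by
  refine ⟨fun hk => (Finset.mem_filter.mp hk).2, fun hk => Finset.mem_filter.mpr ⟨?_, hk⟩⟩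
  exact Finset.mem_Iic.mpr fun i => Nat.le_floor ((Nat.cast_le.mpr (le_mdeg k i)).trans hk)

lemma le_floor_of_mem_lowDeg (hk : k ∈ lowDeg d γ) (i : Fin d) : k i ≤ ⌊γ⌋₊ :=
  Finset.mem_Iic.mp (Finset.mem_filter.mp hk).1 i

end MultiIndex

section PartialDerivative

variable {f g : Ed d → ℝ}

lemma pd_eq_fderiv (hf : Differentiable ℝ f) (i : Fin d) :
    pd i f = fun x => fderiv ℝ f x (EuclideanSpace.single i 1) :=
  funext fun x => (hf x).lineDeriv_eq_fderiv

lemma contDiff_pd (hf : ContDiff ℝ ∞ f) (i : Fin d) : ContDiff ℝ ∞ (pd i f) := by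
  rw [pd_eq_fderiv (hf.differentiable (by simp))]
  exact (hf.fderiv_right (by simp)).clm_apply contDiff_const

lemma pd_add (hf : Differentiable ℝ f) (hg : Differentiable ℝ g) (i : Fin d) :
    pd i (f + g) = pd i f + pd i g := by
  ext x
  simp [pd_eq_fderiv, hf, hg, hf.add hg, fderiv_add (hf x) (hg x)]

lemma pd_const_smul (hf : Differentiable ℝ f) (a : ℝ) (i : Fin d) :
    pd i (a • f) = a • pd i f := by
  ext x
  simp [pd_eq_fderiv, hf, hf.const_smul a, fderiv_const_smul (hf x)]

lemma pd_comp_smul (hf : Differentiable ℝ f) (s : ℝ) (i : Fin d) :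
    pd i (fun x => f (s • x)) = s • fun x => pd i f (s • x) := by
  have hL : Differentiable ℝ fun x : Ed d => s • x := differentiable_id.const_smul s
  rw [pd_eq_fderiv (f := fun x => f (s • x)) (hf.comp hL), pd_eq_fderiv hf]
  ext x
  rw [fderiv_fun_comp x (hf _) (hL x),
    fderiv_fun_const_smul (f := fun y => y) differentiableAt_fun_id]
  simp

lemma tsupport_pd_subset (f : Ed d → ℝ) (i : Fin d) : tsupport (pd i f) ⊆ tsupport f := by
  refine closure_minimal (fun x hx => ?_) (isClosed_tsupport f)
  by_contra hxf
  have hf0 : f =ᶠ[𝓝 x] 0 := by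
    filter_upwards [(isClosed_tsupport f).isOpen_compl.mem_nhds hxf] with y hy
    exact image_eq_zero_of_notMem_tsupport hy
  exact hx (by rw [pd, hf0.lineDeriv_eq]; simp [lineDeriv])

lemma iterate_pd_eq_foldr (i : Fin d) (n : ℕ) (f : Ed d → ℝ) :
    (pd i)^[n] f = (List.replicate n i).foldr pd f := by
  induction n with
  | zero => rfl
  | succ n ih => rw [Function.iterate_succ_apply', ih, List.replicate_succ, List.foldr_cons]

/-- Flattening `∂^k` into one list of coordinate derivatives lets each property of `mderiv`
below be proved by a single induction on lists. -/
lemma mderiv_eq_foldr (k : MIdx d) (f : Ed d → ℝ) :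
    mderiv k f = ((List.finRange d).flatMap fun i => List.replicate (k i) i).foldr pd f := by
  rw [mderiv]
  induction List.finRange d with
  | nil => rfl
  | cons i L ih => rw [List.foldr_cons, ih, List.flatMap_cons, List.foldr_append,
      iterate_pd_eq_foldr]

lemma length_flatMap_replicate (k : MIdx d) :
    ((List.finRange d).flatMap fun i => List.replicate (k i) i).length = mdeg k := by
  simp [List.length_flatMap, mdeg, Fin.sum_univ_def]

end PartialDerivative

section IteratedPartialDerivative

variable {f g : Ed d → ℝ}

lemma contDiff_foldr_pd (hf : ContDiff ℝ ∞ f) (L : List (Fin d)) :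
    ContDiff ℝ ∞ (L.foldr pd f) := by
  induction L with
  | nil => exact hf
  | cons i L ih => exact contDiff_pd ih i

lemma foldr_pd_add (hf : ContDiff ℝ ∞ f) (hg : ContDiff ℝ ∞ g) (L : List (Fin d)) :
    L.foldr pd (f + g) = L.foldr pd f + L.foldr pd g := by
  induction L with
  | nil => rfl
  | cons i L ih =>
    rw [List.foldr_cons, ih, pd_add ((contDiff_foldr_pd hf L).differentiable (by simp))
      ((contDiff_foldr_pd hg L).differentiable (by simp))]
    rfl

lemma foldr_pd_const_smul (hf : ContDiff ℝ ∞ f) (a : ℝ) (L : List (Fin d)) :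
    L.foldr pd (a • f) = a • L.foldr pd f := by
  induction L with
  | nil => rfl
  | cons i L ih =>
    rw [List.foldr_cons, ih, pd_const_smul ((contDiff_foldr_pd hf L).differentiable (by simp))]
    rfl

lemma tsupport_foldr_pd_subset (f : Ed d → ℝ) (L : List (Fin d)) :
    tsupport (L.foldr pd f) ⊆ tsupport f := by
  induction L with
  | nil => rfl
  | cons i L ih => exact (tsupport_pd_subset _ i).trans ih

lemma foldr_pd_comp_smul (hf : ContDiff ℝ ∞ f) (s : ℝ) (L : List (Fin d)) :
    L.foldr pd (fun x => f (s • x)) = s ^ L.length • fun x => L.foldr pd f (s • x) := by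
  induction L with
  | nil => simp
  | cons i L ih =>
    have hL : Differentiable ℝ (L.foldr pd f) := (contDiff_foldr_pd hf L).differentiable (by simp)
    rw [List.foldr_cons, ih, pd_const_smul (f := fun x => L.foldr pd f (s • x))
      (hL.comp (differentiable_id.const_smul s)), pd_comp_smul hL, smul_smul, List.length_cons,
      pow_succ]
    rfl

variable (k : MIdx d)

lemma contDiff_mderiv (hf : ContDiff ℝ ∞ f) : ContDiff ℝ ∞ (mderiv k f) := by
  rw [mderiv_eq_foldr]
  exact contDiff_foldr_pd hf _

lemma mderiv_add (hf : ContDiff ℝ ∞ f) (hg : ContDiff ℝ ∞ g) :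
    mderiv k (f + g) = mderiv k f + mderiv k g := by
  simp only [mderiv_eq_foldr, foldr_pd_add hf hg]

lemma mderiv_const_smul (hf : ContDiff ℝ ∞ f) (a : ℝ) :
    mderiv k (a • f) = a • mderiv k f := by
  simp only [mderiv_eq_foldr, foldr_pd_const_smul hf]

lemma tsupport_mderiv_subset (f : Ed d → ℝ) : tsupport (mderiv k f) ⊆ tsupport f := by
  rw [mderiv_eq_foldr]
  exact tsupport_foldr_pd_subset f _

lemma mderiv_comp_smul (hf : ContDiff ℝ ∞ f) (s : ℝ) :
    mderiv k (fun x => f (s • x)) = s ^ mdeg k • fun x => mderiv k f (s • x) := by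
  simp only [mderiv_eq_foldr, foldr_pd_comp_smul hf, length_flatMap_replicate]

lemma mderiv_sub (hf : ContDiff ℝ ∞ f) (hg : ContDiff ℝ ∞ g) :
    mderiv k (f - g) = mderiv k f - mderiv k g := by
  rw [sub_eq_add_neg, ← neg_one_smul ℝ g, mderiv_add k hf (by exact hg.const_smul (-1 : ℝ)),
    mderiv_const_smul k hg, neg_one_smul, ← sub_eq_add_neg]

lemma mderiv_sum {ι : Type*} (s : Finset ι) {F : ι → Ed d → ℝ}
    (hF : ∀ i ∈ s, ContDiff ℝ ∞ (F i)) :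
    mderiv k (∑ i ∈ s, F i) = ∑ i ∈ s, mderiv k (F i) := by
  classical
  induction s using Finset.induction with
  | empty => simpa using mderiv_const_smul k (contDiff_const (c := (0 : ℝ))) 0
  | insert a s ha ih =>
    rw [Finset.forall_mem_insert] at hF
    rw [Finset.sum_insert ha, Finset.sum_insert ha,
      mderiv_add k hF.1 (by rw [Finset.sum_fn]; exact ContDiff.sum hF.2), ih hF.2]

lemma mderiv_zero (f : Ed d → ℝ) : mderiv 0 f = f := by
  simp [mderiv]

end IteratedPartialDerivative

section Rescaling

variable {f : Ed d → ℝ}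

lemma scTF_zero_eq_smul (f : Ed d → ℝ) (a : ℝ) :
    scTF f 0 a = (a ^ d)⁻¹ • fun y => f (a⁻¹ • y) := by
  ext y
  simp [scTF]

lemma scTF_scTF_zero (f : Ed d → ℝ) (a b : ℝ) : scTF (scTF f 0 a) 0 b = scTF f 0 (b * a) := by
  ext y
  simp only [scTF, sub_zero, smul_smul, mul_pow, mul_inv]
  ring_nf

lemma scTF_zero_one (f : Ed d → ℝ) : scTF f 0 1 = f := by
  ext y
  simp [scTF]

lemma scTF_sub (f g : Ed d → ℝ) (x : Ed d) (a : ℝ) :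
    scTF (f - g) x a = scTF f x a - scTF g x a := by
  ext y
  simp [scTF, mul_sub]

lemma contDiff_scTF_zero (hf : ContDiff ℝ ∞ f) (a : ℝ) : ContDiff ℝ ∞ (scTF f 0 a) := by
  rw [scTF_zero_eq_smul]
  exact (hf.comp (contDiff_const_smul a⁻¹)).const_smul (a ^ d)⁻¹

lemma tsupport_scTF_zero_subset {R a : ℝ} (ha : 0 < a) (hf : tsupport f ⊆ closedBall 0 R) :
    tsupport (scTF f 0 a) ⊆ closedBall 0 (a * R) := by
  have hsupp : Function.support (scTF f 0 a) ⊆ {y | a⁻¹ • y ∈ closedBall (0 : Ed d) R} :=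
    fun y hy => hf (subset_closure (by simpa [scTF] using right_ne_zero_of_mul hy))
  refine (closure_minimal hsupp (isClosed_closedBall.preimage (continuous_const_smul a⁻¹))).trans
    fun y hy => ?_
  have h : ‖a⁻¹ • y‖ ≤ R := mem_closedBall_zero_iff.mp hy
  rw [norm_smul, norm_inv, Real.norm_of_nonneg ha.le, inv_mul_le_iff₀ ha] at h
  exact mem_closedBall_zero_iff.mpr h

lemma mderiv_scTF_zero (hf : ContDiff ℝ ∞ f) (a : ℝ) (k : MIdx d) :
    mderiv k (scTF f 0 a) = ((a ^ d)⁻¹ * a⁻¹ ^ mdeg k) • fun y => mderiv k f (a⁻¹ • y) := by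
  rw [scTF_zero_eq_smul,
    mderiv_const_smul (f := fun y => f (a⁻¹ • y)) k (hf.comp (contDiff_const_smul a⁻¹)),
    mderiv_comp_smul k hf, smul_smul]

lemma abs_mderiv_scTF_zero_le (hf : ContDiff ℝ ∞ f) {a : ℝ} (ha : 1 ≤ a) {k : MIdx d} {B : ℝ}
    (hB : ∀ x, |mderiv k f x| ≤ B) (y : Ed d) : |mderiv k (scTF f 0 a) y| ≤ B := by
  have hc0 : 0 ≤ (a ^ d)⁻¹ * a⁻¹ ^ mdeg k := by positivity
  have hc1 : (a ^ d)⁻¹ * a⁻¹ ^ mdeg k ≤ 1 :=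
    mul_le_one₀ (inv_le_one_of_one_le₀ (one_le_pow₀ ha)) (pow_nonneg (by positivity) _)
      (pow_le_one₀ (by positivity) (inv_le_one_of_one_le₀ ha))
  rw [mderiv_scTF_zero hf, Pi.smul_apply, smul_eq_mul, abs_mul, abs_of_nonneg hc0]
  exact (mul_le_mul_of_nonneg_left (hB _) hc0).trans
    (mul_le_of_le_one_left ((abs_nonneg _).trans (hB 0)) hc1)

end Rescaling

section Moments

variable {f g : Ed d → ℝ}

def moment (f : Ed d → ℝ) (k : MIdx d) : ℝ := ∫ z, f z * mpow z k

lemma continuous_mpow (k : MIdx d) : Continuous fun z : Ed d => mpow z k := by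
  unfold mpow
  fun_prop

lemma mpow_smul (s : ℝ) (v : Ed d) (k : MIdx d) : mpow (s • v) k = s ^ mdeg k * mpow v k := by
  simp only [mpow, mdeg, PiLp.smul_apply, smul_eq_mul, mul_pow, Finset.prod_mul_distrib,
    Finset.prod_pow_eq_pow_sum]

lemma abs_mpow_le_one {z : Ed d} (hz : ‖z‖ ≤ 1) (k : MIdx d) : |mpow z k| ≤ 1 := by
  rw [mpow, Finset.abs_prod]
  exact Finset.prod_le_one (fun i _ => abs_nonneg _) fun i _ => by
    rw [abs_pow]
    exact pow_le_one₀ (abs_nonneg _) ((PiLp.norm_apply_le z i).trans hz)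

lemma integrable_mul_mpow (hf : Continuous f) (hfc : HasCompactSupport f) (k : MIdx d) :
    Integrable fun z => f z * mpow z k :=
  (hf.mul (continuous_mpow k)).integrable_of_hasCompactSupport hfc.mul_right

lemma moment_sub (hf : Continuous f) (hfc : HasCompactSupport f) (hg : Continuous g)
    (hgc : HasCompactSupport g) (k : MIdx d) : moment (f - g) k = moment f k - moment g k := by
  simp only [moment, Pi.sub_apply, sub_mul]
  exact integral_sub (integrable_mul_mpow hf hfc k) (integrable_mul_mpow hg hgc k)

lemma moment_const_smul (a : ℝ) (f : Ed d → ℝ) (k : MIdx d) :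
    moment (a • f) k = a * moment f k := by
  simp only [moment, Pi.smul_apply, smul_eq_mul, mul_assoc, integral_const_mul]

lemma moment_sum {ι : Type*} (s : Finset ι) {F : ι → Ed d → ℝ}
    (hF : ∀ i ∈ s, Continuous (F i) ∧ HasCompactSupport (F i)) (k : MIdx d) :
    moment (∑ i ∈ s, F i) k = ∑ i ∈ s, moment (F i) k := by
  simp only [moment, Finset.sum_apply, Finset.sum_mul]
  exact integral_finsetSum s fun i hi => integrable_mul_mpow (hF i hi).1 (hF i hi).2 k

lemma moment_scTF_zero (f : Ed d → ℝ) {a : ℝ} (ha : 0 < a) (k : MIdx d) :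
    moment (scTF f 0 a) k = a ^ mdeg k * moment f k := by
  have h : ∀ z : Ed d, scTF f 0 a z * mpow z k
      = (a ^ d)⁻¹ * a ^ mdeg k * (f (a⁻¹ • z) * mpow (a⁻¹ • z) k) := fun z => by
    have : a ^ mdeg k ≠ 0 := by positivity
    rw [mpow_smul, scTF, sub_zero, inv_pow]
    field_simp
  simp only [moment, h, integral_const_mul]
  rw [Measure.integral_comp_inv_smul_of_nonneg volume (fun w => f w * mpow w k) ha.le,
    finrank_euclideanSpace_fin, smul_eq_mul]
  field_simp

lemma abs_moment_le (hf : ∀ z, |f z| ≤ 1) (hsupp : tsupport f ⊆ closedBall 0 1) (k : MIdx d) :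
    |moment f k| ≤ volume.real (closedBall (0 : Ed d) 1) := by
  rw [moment, ← setIntegral_eq_integral_of_forall_compl_eq_zero fun z hz => by
    rw [image_eq_zero_of_notMem_tsupport fun h => hz (hsupp h), zero_mul]]
  simpa using norm_setIntegral_le_of_norm_le_const (f := fun z => f z * mpow z k)
    measure_closedBall_lt_top fun z hz => (abs_mul _ _).trans_le (mul_le_one₀ (hf z) (abs_nonneg _)
      (abs_mpow_le_one (mem_closedBall_zero_iff.mp hz) k))

end Moments

section DerivBound

variable {r : ℕ} {B C : ℝ} {f g : Ed d → ℝ}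

def DerivBound (r : ℕ) (B : ℝ) (f : Ed d → ℝ) : Prop :=
  ∀ k : MIdx d, mdeg k ≤ r → ∀ x, |mderiv k f x| ≤ B

lemma DerivBound.mono (h : DerivBound r B f) (hBC : B ≤ C) : DerivBound r C f :=
  fun k hk x => (h k hk x).trans hBC

lemma DerivBound.nonneg (h : DerivBound r B f) : 0 ≤ B :=
  (abs_nonneg _).trans (h 0 (by simp [mdeg]) 0)

lemma DerivBound.sub (hf : ContDiff ℝ ∞ f) (hg : ContDiff ℝ ∞ g) (hfB : DerivBound r B f)
    (hgC : DerivBound r C g) : DerivBound r (B + C) (f - g) := fun k hk x => by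
  rw [mderiv_sub k hf hg, Pi.sub_apply]
  exact (abs_sub _ _).trans (add_le_add (hfB k hk x) (hgC k hk x))

lemma DerivBound.const_smul (hf : ContDiff ℝ ∞ f) (h : DerivBound r B f) (a : ℝ) :
    DerivBound r (|a| * B) (a • f) := fun k hk x => by
  rw [mderiv_const_smul k hf, Pi.smul_apply, smul_eq_mul, abs_mul]
  exact mul_le_mul_of_nonneg_left (h k hk x) (abs_nonneg a)

lemma DerivBound.sum {ι : Type*} (s : Finset ι) {F : ι → Ed d → ℝ} {B : ι → ℝ}
    (hF : ∀ i ∈ s, ContDiff ℝ ∞ (F i)) (h : ∀ i ∈ s, DerivBound r (B i) (F i)) :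
    DerivBound r (∑ i ∈ s, B i) (∑ i ∈ s, F i) := fun k hk x => by
  rw [mderiv_sum k s hF, Finset.sum_apply]
  exact (Finset.abs_sum_le_sum_abs _ _).trans (Finset.sum_le_sum fun i hi => h i hi k hk x)

lemma DerivBound.scTF_zero (hf : ContDiff ℝ ∞ f) (h : DerivBound r B f) {a : ℝ} (ha : 1 ≤ a) :
    DerivBound r B (scTF f 0 a) :=
  fun k hk => abs_mderiv_scTF_zero_le hf ha (h k hk)

lemma exists_derivBound (hf : ContDiff ℝ ∞ f) (hfc : HasCompactSupport f) (r : ℕ) :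
    ∃ B, DerivBound r B f := by
  choose C hC using fun k : MIdx d =>
    (contDiff_mderiv k hf).continuous.bounded_above_of_compact_support
      (hfc.mono' ((subset_tsupport _).trans (tsupport_mderiv_subset k f)))
  refine ⟨∑ k ∈ Finset.Iic (fun _ => r), |C k|, fun k hk x => ?_⟩
  have hkr : k ∈ Finset.Iic (fun _ => r) := Finset.mem_Iic.mpr fun i => (le_mdeg k i).trans hk
  exact (hC k x).trans ((le_abs_self _).trans
    (Finset.single_le_sum (fun j _ => abs_nonneg (C j)) hkr))

lemma mem_smul_TB (hB : 0 < B) (hf : ContDiff ℝ ∞ f) (hsupp : tsupport f ⊆ closedBall 0 1)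
    (h : DerivBound r B f) : f ∈ B • TB d r := by
  rw [Set.mem_smul_set_iff_inv_smul_mem₀ hB.ne']
  have hsupp' := (tsupport_const_smul_subset B⁻¹ f).trans hsupp
  refine ⟨⟨hf.const_smul B⁻¹, hasCompactSupport_of_tsupport_subset_closedBall hsupp'⟩, hsupp',
    fun k hk x => ?_⟩
  have := (h.const_smul hf B⁻¹) k hk x
  rwa [abs_of_pos (inv_pos.mpr hB), inv_mul_cancel₀ hB.ne'] at this

lemma mem_smul_TBAnn {γ : ℝ} (hB : 0 < B) (hf : ContDiff ℝ ∞ f)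
    (hsupp : tsupport f ⊆ closedBall 0 1) (h : DerivBound r B f)
    (hmom : ∀ k : MIdx d, (mdeg k : ℝ) ≤ γ → moment f k = 0) : f ∈ B • TBAnn d r γ := by
  have hTB := mem_smul_TB hB hf hsupp h
  rw [Set.mem_smul_set_iff_inv_smul_mem₀ hB.ne'] at hTB ⊢
  refine ⟨hTB, hTB.1, hTB.2.1, fun k hk => ?_⟩
  change moment (B⁻¹ • f) k = 0
  rw [moment_const_smul, hmom k hk, mul_zero]

end DerivBound

section DualBasis

open Matrix

lemma eq_zero_of_forall_sum_mul_pow_eq_zero {n : ℕ} {a t : Fin n → ℝ} (ht : Function.Injective t)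
    (h : ∀ i, ∑ j, a j * t i ^ (j : ℕ) = 0) : a = 0 := by
  refine eq_zero_of_mulVec_eq_zero (det_vandermonde_ne_zero_iff.mpr ht) ?_
  ext i
  simpa [mulVec, dotProduct, vandermonde_apply, mul_comm] using h i

def momentGram (b : ℝ → ℝ) (n : ℕ) : Matrix (Fin n) (Fin n) ℝ :=
  fun i j => ∫ t, b t * t ^ (i + j : ℕ)

lemma integrable_mul_pow {b : ℝ → ℝ} (hb : Continuous b) (hbc : HasCompactSupport b) (m : ℕ) :
    Integrable fun t => b t * t ^ m :=
  (hb.mul (continuous_pow m)).integrable_of_hasCompactSupport hbc.mul_right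

lemma integral_mul_sq_sum_eq_dotProduct_momentGram {b : ℝ → ℝ} (hb : Continuous b)
    (hbc : HasCompactSupport b) {n : ℕ} (a : Fin n → ℝ) :
    ∫ t, b t * (∑ j, a j * t ^ (j : ℕ)) ^ 2 = a ⬝ᵥ (momentGram b n *ᵥ a) := by
  have h : ∀ t, b t * (∑ j, a j * t ^ (j : ℕ)) ^ 2
      = ∑ i, ∑ j, a i * a j * (b t * t ^ (i + j : ℕ)) := fun t => by
    rw [sq, Finset.sum_mul_sum, Finset.mul_sum]
    refine Finset.sum_congr rfl fun i _ => ?_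
    rw [Finset.mul_sum]
    exact Finset.sum_congr rfl fun j _ => by rw [pow_add]; ring
  simp only [h, dotProduct, mulVec, momentGram, Finset.mul_sum]
  rw [integral_finsetSum _ fun i _ => integrable_finsetSum _ fun j _ =>
    (integrable_mul_pow hb hbc _).const_mul _]
  refine Finset.sum_congr rfl fun i _ => ?_
  rw [integral_finsetSum _ fun j _ => (integrable_mul_pow hb hbc _).const_mul _]
  exact Finset.sum_congr rfl fun j _ => by rw [integral_const_mul]; ring

lemma momentGram_mulVec_injective (b : ContDiffBump (0 : ℝ)) (n : ℕ) :
    Function.Injective (momentGram b n).mulVecLin := by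
  rw [← LinearMap.ker_eq_bot, LinearMap.ker_eq_bot']
  intro a ha
  set P : ℝ → ℝ := fun t => ∑ j, a j * t ^ (j : ℕ)
  have hP : Continuous P := by fun_prop
  have hcont : Continuous fun t => b t * P t ^ 2 := b.continuous.mul (hP.pow 2)
  have hint : ∫ t, b t * P t ^ 2 = 0 := by
    rw [integral_mul_sq_sum_eq_dotProduct_momentGram b.continuous b.hasCompactSupport]
    simp [show momentGram b n *ᵥ a = 0 from ha]
  have hzero : ∀ t, b t * P t ^ 2 = 0 := congrFun <| (hcont.ae_eq_iff_eq volume continuous_const).mp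
    ((integral_eq_zero_iff_of_nonneg (fun t => mul_nonneg b.nonneg (sq_nonneg _))
      (hcont.integrable_of_hasCompactSupport b.hasCompactSupport.mul_right)).mp hint)
  have hc : 0 < b.rOut / (n + 1) := by have := b.rOut_pos; positivity
  refine eq_zero_of_forall_sum_mul_pow_eq_zero (t := fun i => b.rOut / (n + 1) * i)
    (fun i j hij => Fin.val_injective (by exact_mod_cast mul_left_cancel₀ hc.ne' hij)) fun i => ?_
  have hti : b.rOut / (n + 1) * i ∈ ball 0 b.rOut := by
    rw [mem_ball_zero_iff, Real.norm_of_nonneg (by positivity), div_mul_eq_mul_div,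
      div_lt_iff₀ (by positivity)]
    exact mul_lt_mul_of_pos_left (by exact_mod_cast i.isLt.trans n.lt_succ_self) b.rOut_pos
  exact pow_eq_zero_iff two_ne_zero |>.mp
    ((mul_eq_zero.mp (hzero _)).resolve_left (b.pos_of_mem_ball hti).ne')

lemma exists_dual_moment_real {N j : ℕ} (hj : j ≤ N) {ε : ℝ} (hε : 0 < ε) :
    ∃ ν : ℝ → ℝ, ContDiff ℝ ∞ ν ∧ tsupport ν ⊆ closedBall 0 ε ∧
      ∀ i ≤ N, ∫ t, ν t * t ^ i = if i = j then 1 else 0 := by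
  let b : ContDiffBump (0 : ℝ) := ⟨ε / 2, ε, half_pos hε, half_lt_self hε⟩
  obtain ⟨c, hc⟩ := LinearMap.injective_iff_surjective.mp (momentGram_mulVec_injective b (N + 1))
    (Pi.single ⟨j, Nat.lt_succ_of_le hj⟩ 1)
  refine ⟨fun t => b t * ∑ m : Fin (N + 1), c m * t ^ (m : ℕ), ?_, ?_, fun i hi => ?_⟩
  · exact b.contDiff.mul (ContDiff.sum fun m _ => contDiff_const.mul (contDiff_id.pow _))
  · exact tsupport_mul_subset_left.trans b.tsupport_eq.subset
  · have hint : ∀ m : Fin (N + 1), Integrable fun t => c m * (b t * t ^ (i + m : ℕ)) :=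
      fun m => (integrable_mul_pow b.continuous b.hasCompactSupport _).const_mul (c m)
    have hGc := congrFun hc ⟨i, Nat.lt_succ_of_le hi⟩
    simp only [mulVecLin_apply, mulVec, dotProduct, momentGram, Pi.single_apply,
      Fin.mk.injEq] at hGc
    rw [← hGc]
    have hpt : ∀ t, (b t * ∑ m : Fin (N + 1), c m * t ^ (m : ℕ)) * t ^ i
        = ∑ m : Fin (N + 1), c m * (b t * t ^ (i + m : ℕ)) := fun t => by
      simp only [Finset.mul_sum, Finset.sum_mul, pow_add]
      exact Finset.sum_congr rfl fun m _ => by ring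
    simp only [hpt]
    rw [integral_finsetSum _ fun m _ => hint m]
    exact Finset.sum_congr rfl fun m _ => by rw [integral_const_mul, mul_comm]

lemma integral_prod_coord (f : Fin d → ℝ → ℝ) :
    ∫ z : Ed d, ∏ i, f i (z i) = ∏ i, ∫ t, f i t := by
  rw [← (PiLp.volume_preserving_toLp (Fin d)).integral_comp
    (MeasurableEquiv.toLp 2 _).measurableEmbedding]
  exact integral_fintype_prod_volume_eq_prod f

lemma norm_le_sqrt_mul_of_forall_abs_apply_le {z : Ed d} {ε : ℝ} (hε : 0 ≤ ε)
    (h : ∀ i, |z i| ≤ ε) : ‖z‖ ≤ √d * ε := by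
  rw [EuclideanSpace.norm_eq, ← Real.sqrt_sq hε, ← Real.sqrt_mul (Nat.cast_nonneg d)]
  refine Real.sqrt_le_sqrt ?_
  calc ∑ i, ‖z i‖ ^ 2 ≤ ∑ _i : Fin d, ε ^ 2 := Finset.sum_le_sum fun i _ => by
        rw [Real.norm_eq_abs]
        exact pow_le_pow_left₀ (abs_nonneg _) (h i) 2
    _ = d * ε ^ 2 := by simp

def IsMomentDual (N : ℕ) (μ : MIdx d → Ed d → ℝ) : Prop :=
  ∀ k : MIdx d, (∀ i, k i ≤ N) →
    ContDiff ℝ ∞ (μ k) ∧ tsupport (μ k) ⊆ closedBall 0 (1 / 2) ∧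
    ∀ l : MIdx d, (∀ i, l i ≤ N) → moment (μ k) l = if l = k then 1 else 0

lemma exists_isMomentDual (d N : ℕ) : ∃ μ : MIdx d → Ed d → ℝ, IsMomentDual N μ := by
  set ε : ℝ := (2 * (√d + 1))⁻¹
  have hε : 0 < ε := by positivity
  have hdε : √d * ε ≤ 1 / 2 := by
    rw [← div_eq_mul_inv, div_le_iff₀ (by positivity)]
    linarith [Real.sqrt_nonneg d]
  choose! ν hν using fun j (hj : j ≤ N) => exists_dual_moment_real hj hε
  refine ⟨fun k z => ∏ i, ν (k i) (z i), fun k hk => ⟨?_, ?_, fun l hl => ?_⟩⟩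
  · exact contDiff_prod fun i _ => (hν (k i) (hk i)).1.comp (contDiff_piLp_apply 2)
  · refine closure_minimal (fun z hz => mem_closedBall_zero_iff.mpr
      ((norm_le_sqrt_mul_of_forall_abs_apply_le hε.le fun i => ?_).trans hdε)) isClosed_closedBall
    simpa using (hν (k i) (hk i)).2.1
      (subset_closure (Finset.prod_ne_zero_iff.mp hz i (Finset.mem_univ i)))
  · simp only [moment, mpow, ← Finset.prod_mul_distrib]
    rw [integral_prod_coord (fun i t => ν (k i) t * t ^ l i)]
    simp only [fun i => (hν (k i) (hk i)).2.2 (l i) (hl i), Fintype.prod_boole, funext_iff]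
    congr

end DualBasis

section MomentMatch

variable {γ : ℝ} {μ : MIdx d → Ed d → ℝ}

def momentMatch (μ : MIdx d → Ed d → ℝ) (γ : ℝ) (ψ : Ed d → ℝ) (s : ℝ) : Ed d → ℝ :=
  ∑ k ∈ lowDeg d γ, (s ^ mdeg k * moment ψ k) • μ k

lemma contDiff_momentMatch (hμ : IsMomentDual ⌊γ⌋₊ μ) (ψ : Ed d → ℝ) (s : ℝ) :
    ContDiff ℝ ∞ (momentMatch μ γ ψ s) := by
  rw [momentMatch, Finset.sum_fn]
  exact ContDiff.sum fun k hk => (hμ k (le_floor_of_mem_lowDeg hk)).1.const_smul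
    (s ^ mdeg k * moment ψ k)

lemma tsupport_momentMatch_subset (hμ : IsMomentDual ⌊γ⌋₊ μ) (ψ : Ed d → ℝ) (s : ℝ) :
    tsupport (momentMatch μ γ ψ s) ⊆ closedBall 0 (1 / 2) := by
  refine closure_minimal (fun z hz => ?_) isClosed_closedBall
  rw [momentMatch, Finset.sum_fn] at hz
  obtain ⟨k, hk, hzk⟩ := Set.mem_iUnion₂.mp (Finset.support_sum _ _ hz)
  exact (hμ k (le_floor_of_mem_lowDeg hk)).2.1 (subset_closure (right_ne_zero_of_mul hzk))

lemma moment_momentMatch (hμ : IsMomentDual ⌊γ⌋₊ μ) (ψ : Ed d → ℝ) (s : ℝ) {l : MIdx d}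
    (hl : l ∈ lowDeg d γ) :
    moment (momentMatch μ γ ψ s) l = s ^ mdeg l * moment ψ l := by
  have hμk := fun k (hk : k ∈ lowDeg d γ) => hμ k (le_floor_of_mem_lowDeg hk)
  rw [momentMatch, moment_sum (F := fun k => (s ^ mdeg k * moment ψ k) • μ k) _ fun k hk =>
    ⟨(hμk k hk).1.continuous.const_smul _, hasCompactSupport_of_tsupport_subset_closedBall
      ((tsupport_const_smul_subset _ _).trans (hμk k hk).2.1)⟩]
  have hl' := le_floor_of_mem_lowDeg hl
  simp only [moment_const_smul]
  rw [Finset.sum_eq_single_of_mem l hl fun k hk hkl => by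
    rw [(hμk k hk).2.2 l hl', if_neg hkl.symm, mul_zero], (hμk l hl).2.2 l hl', if_pos rfl, mul_one]

lemma derivBound_momentMatch (hμ : IsMomentDual ⌊γ⌋₊ μ) (ψ : Ed d → ℝ) (s : ℝ) {r : ℕ}
    {Bμ : MIdx d → ℝ} (hBμ : ∀ k ∈ lowDeg d γ, DerivBound r (Bμ k) (μ k)) {V : ℝ}
    (hψ : ∀ k, |moment ψ k| ≤ V) (hs : |s| ≤ 1) :
    DerivBound r (∑ k ∈ lowDeg d γ, V * Bμ k) (momentMatch μ γ ψ s) := by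
  refine (DerivBound.sum _ (fun k hk => (hμ k (le_floor_of_mem_lowDeg hk)).1.const_smul
    (s ^ mdeg k * moment ψ k)) fun k hk =>
      (hBμ k hk).const_smul (hμ k (le_floor_of_mem_lowDeg hk)).1 _).mono
    (Finset.sum_le_sum fun k hk => mul_le_mul_of_nonneg_right ?_ (hBμ k hk).nonneg)
  rw [abs_mul, abs_pow]
  exact mul_le_of_le_one_left (abs_nonneg _) (pow_le_one₀ (abs_nonneg s) hs) |>.trans (hψ k)

end MomentMatch

section DyadicDecomposition

variable {r : ℕ} {B γ : ℝ} {f g : Ed d → ℝ}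

lemma scTF_two_mem_smul_TB (hB : 0 < B) (hg : ContDiff ℝ ∞ g)
    (hgs : tsupport g ⊆ closedBall 0 (1 / 2)) (hgB : DerivBound r B g) :
    scTF g 0 2 ∈ B • TB d r :=
  mem_smul_TB hB (contDiff_scTF_zero hg 2)
    (by simpa using tsupport_scTF_zero_subset two_pos hgs) (hgB.scTF_zero hg one_le_two)

lemma sub_scTF_two_mem_smul_TBAnn (hB : 0 < B) (hf : ContDiff ℝ ∞ f) (hg : ContDiff ℝ ∞ g)
    (hfs : tsupport f ⊆ closedBall 0 1) (hgs : tsupport g ⊆ closedBall 0 (1 / 2))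
    (hfB : DerivBound r B f) (hgB : DerivBound r B g)
    (hmom : ∀ k : MIdx d, (mdeg k : ℝ) ≤ γ → moment f k = 2 ^ mdeg k * moment g k) :
    f - scTF g 0 2 ∈ (2 * B) • TBAnn d r γ := by
  have hg2 := contDiff_scTF_zero hg 2
  have hg2s : tsupport (scTF g 0 2) ⊆ closedBall 0 1 := by
    simpa using tsupport_scTF_zero_subset two_pos hgs
  refine mem_smul_TBAnn (by positivity) (hf.sub hg2) ((tsupport_sub f _).trans
    (Set.union_subset hfs hg2s)) ((hfB.sub hf hg2 (hgB.scTF_zero hg one_le_two)).mono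
    (by linarith)) fun k hk => ?_
  rw [moment_sub hf.continuous (hasCompactSupport_of_tsupport_subset_closedBall hfs)
    hg2.continuous (hasCompactSupport_of_tsupport_subset_closedBall hg2s),
    moment_scTF_zero _ two_pos, hmom k hk, sub_self]

lemma eq_scTF_add_sum_scTF_sub (Ψ : ℕ → Ed d → ℝ) (M : ℕ) :
    Ψ 0 = scTF (scTF (Ψ (M + 1)) 0 2) 0 (2 ^ M)
      + ∑ n ∈ Finset.range (M + 1), scTF (Ψ n - scTF (Ψ (n + 1)) 0 2) 0 (2 ^ n) := by
  have h : ∀ m n, scTF (scTF (Ψ n) 0 2) 0 (2 ^ m) = scTF (Ψ n) 0 (2 ^ (m + 1)) :=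
    fun m n => by rw [scTF_scTF_zero, pow_succ]
  simp only [scTF_sub, h]
  rw [Finset.sum_range_sub' (fun n => scTF (Ψ n) 0 (2 ^ n)), pow_zero, scTF_zero_one]
  abel

end DyadicDecomposition

lemma exists_dyadic_profile (d r : ℕ) (γ : ℝ) :
    ∃ B > 0, ∀ ψ ∈ TB d r, ∃ Ψ : ℕ → Ed d → ℝ, Ψ 0 = ψ ∧ ∀ n,
      ContDiff ℝ ∞ (Ψ n) ∧ DerivBound r B (Ψ n) ∧ tsupport (Ψ n) ⊆ closedBall 0 1 ∧
      tsupport (Ψ (n + 1)) ⊆ closedBall 0 (1 / 2) ∧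
      ∀ k : MIdx d, (mdeg k : ℝ) ≤ γ → moment (Ψ n) k = 2 ^ mdeg k * moment (Ψ (n + 1)) k := by
  obtain ⟨μ, hμ⟩ := exists_isMomentDual d ⌊γ⌋₊
  choose! Bμ hBμ using fun k (hk : k ∈ lowDeg d γ) =>
    have hμk := hμ k (le_floor_of_mem_lowDeg hk)
    exists_derivBound hμk.1 (hasCompactSupport_of_tsupport_subset_closedBall hμk.2.1) r
  set V := volume.real (closedBall (0 : Ed d) 1)
  set A := ∑ k ∈ lowDeg d γ, V * Bμ k
  have hA : 0 ≤ A := Finset.sum_nonneg fun k hk => mul_nonneg measureReal_nonneg (hBμ k hk).nonneg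
  refine ⟨1 + A, by positivity, fun ψ hψ => ?_⟩
  obtain ⟨⟨hψs, -⟩, hψsupp, hψB : DerivBound r 1 ψ⟩ := hψ
  have hψV : ∀ k, |moment ψ k| ≤ V := abs_moment_le
    (fun z => by simpa [mderiv_zero] using hψB 0 (by simp [mdeg]) z) hψsupp
  let Ψ : ℕ → Ed d → ℝ := fun n => if n = 0 then ψ else momentMatch μ γ ψ ((2 : ℝ) ^ n)⁻¹
  have hmom : ∀ n, ∀ k ∈ lowDeg d γ, moment (Ψ n) k = ((2 : ℝ) ^ n)⁻¹ ^ mdeg k * moment ψ k := by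
    rintro (_ | n) k hk
    · simp [Ψ]
    · exact moment_momentMatch hμ ψ _ hk
  have hsmooth : ∀ n, ContDiff ℝ ∞ (Ψ n) := by
    rintro (_ | n)
    exacts [hψs, contDiff_momentMatch hμ ψ _]
  have hsupp : ∀ n, tsupport (Ψ (n + 1)) ⊆ closedBall 0 (1 / 2) :=
    fun n => tsupport_momentMatch_subset hμ ψ _
  have hbound : ∀ n, DerivBound r (1 + A) (Ψ n) := by
    rintro (_ | n)
    · exact hψB.mono (by linarith)
    · refine (derivBound_momentMatch hμ ψ _ hBμ hψV ?_).mono (by linarith)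
      rw [abs_of_pos (by positivity)]
      exact inv_le_one_of_one_le₀ (one_le_pow₀ one_le_two)
  refine ⟨Ψ, rfl, fun n => ⟨hsmooth n, hbound n, ?_, hsupp n, fun k hk => ?_⟩⟩
  · rcases n with _ | n
    exacts [hψsupp, (hsupp n).trans (closedBall_subset_closedBall (by norm_num))]
  · rw [hmom n k (mem_lowDeg.mpr hk), hmom (n + 1) k (mem_lowDeg.mpr hk), ← mul_assoc,
      ← mul_pow, pow_succ, mul_inv, mul_left_comm, mul_inv_cancel₀ two_ne_zero, mul_one]

theorem large_scale_decomposition_general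
    (d r : ℕ) (c : ℤ) :
    ∃ cst : ℝ, 0 < cst ∧
      ∀ ψ ∈ TB d r, ∀ M : ℕ,
        ∃ (ψt : Ed d → ℝ) (ψc : ℕ → Ed d → ℝ),
          ψt ∈ cst • TB d r ∧
          (∀ n : ℕ, n ≤ M → ψc n ∈ cst • TBAnn d r (c : ℝ)) ∧
          ∀ y : Ed d,
            ψ y = scTF ψt 0 ((2 : ℝ) ^ M) y
              + ∑ n ∈ Finset.range (M + 1), scTF (ψc n) 0 ((2 : ℝ) ^ n) y := by
  obtain ⟨B, hB, hprofile⟩ := exists_dyadic_profile d r c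
  refine ⟨2 * B, by positivity, fun ψ hψ M => ?_⟩
  obtain ⟨Ψ, rfl, hΨ⟩ := hprofile ψ hψ
  refine ⟨scTF (Ψ (M + 1)) 0 2, fun n => Ψ n - scTF (Ψ (n + 1)) 0 2, ?_, fun n _ => ?_,
    fun y => by simpa using congrFun (eq_scTF_add_sum_scTF_sub Ψ M) y⟩
  · obtain ⟨-, -, -, hsupp, -⟩ := hΨ M
    obtain ⟨hs, hb, -⟩ := hΨ (M + 1)
    exact scTF_two_mem_smul_TB (by positivity) hs hsupp (hb.mono (by linarith))
  · obtain ⟨hs, hb, hsupp, hsupp', hmom⟩ := hΨ n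
    obtain ⟨hs', hb', -⟩ := hΨ (n + 1)
    exact sub_scTF_two_mem_smul_TBAnn hB hs hs' hsupp hsupp' hb hb' hmom

/-- Lemma 4.10, large scale decomposition of test functions: for
`r ∈ ℕ₀`, `c ∈ ℕ₀ ∪ {-1}`, there is a constant `cst > 0` (depending only on `r,c,d`)
such that every `ψ ∈ 𝓑^r` can be written, for every `M ∈ ℕ₀`, as
`ψ = (ψ̃^{[M]})^{2^M} + Σ_{n=0}^M (ψ̌^{[n]})^{2^n}` with `ψ̃^{[M]} ∈ cst·𝓑^r` and
`ψ̌^{[n]} ∈ cst·𝓑^r_c` for `0 ≤ n ≤ M`. -/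
theorem large_scale_decomposition
    (d r : ℕ) (c : ℤ) (hc : -1 ≤ c) :
    ∃ cst : ℝ, 0 < cst ∧
      ∀ ψ ∈ TB d r, ∀ M : ℕ,
        ∃ (ψt : Ed d → ℝ) (ψc : ℕ → Ed d → ℝ),
          ψt ∈ cst • TB d r ∧
          (∀ n : ℕ, n ≤ M → ψc n ∈ cst • TBAnn d r (c : ℝ)) ∧
          ∀ y : Ed d,
            ψ y = scTF ψt 0 ((2 : ℝ) ^ M) y
              + ∑ n ∈ Finset.range (M + 1), scTF (ψc n) 0 ((2 : ℝ) ^ n) y :=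
  large_scale_decomposition_general d r c
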